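/- arXiv:1002.0043 — 4 statements merged into one kernel-verified Lean document; each statement's English description precedes it below -/
import Mathlib

section
/- For D ∈ (0,1), the function h(u) = H(u) - H(u+D-1) maps the interval [1-D, 1-D/2) bijectively onto (0, H(1-D)], where the image is taken in reversed order (h(1-D) = H(1-D) and h(u) → 0 as u → 1-D/2). -/
/-!
Since `binH` is strictly concave on `[0, 1]`, its increments `u ↦ binH u - binH (u - c)` over a
fixed step `c = 1 - D` strictly decrease. At `u = 1 - D` the increment is `binH (1 - D)`, and at
`u = 1 - D / 2` it vanishes by the symmetry `binH (1 - x) = binH x`. Continuity and the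
intermediate value theorem then give the bijection.
-/

open Real Set Filter

/-- Binary entropy function (base-2 logarithm). -/
noncomputable def binH (u : ℝ) : ℝ := -(u * Real.logb 2 u) - (1 - u) * Real.logb 2 (1 - u)

theorem StrictConcaveOn.strictAntiOn_sub_comp_sub_const {𝕜 : Type*} [Field 𝕜] [LinearOrder 𝕜]
    [IsStrictOrderedRing 𝕜] {s : Set 𝕜} {f : 𝕜 → 𝕜} (hf : StrictConcaveOn 𝕜 s f) {c : 𝕜}
    (hc : 0 < c) : StrictAntiOn (fun x => f x - f (x - c)) {x | x ∈ s ∧ x - c ∈ s} := by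
  rintro x ⟨hx, hxc⟩ y ⟨hy, hyc⟩ hxy
  -- the secant slopes over `[y - c, y]`, `[x - c, y]`, `[x - c, x]` strictly increase
  have h₁ : (f (y - c) - f y) / (y - c - y) < (f (x - c) - f y) / (x - c - y) :=
    hf.secant_strict_mono hy hxc hyc (by linarith) (by linarith) (by linarith)
  have h₂ : (f y - f (x - c)) / (y - (x - c)) < (f x - f (x - c)) / (x - (x - c)) :=
    hf.secant_strict_mono hxc hx hy (by linarith) (by linarith) hxy
  rw [show y - c - y = -c by ring, show x - c - y = -(y - (x - c)) by ring, div_neg, div_neg,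
    ← neg_div, ← neg_div, neg_sub, neg_sub] at h₁
  rw [show x - (x - c) = c by ring] at h₂
  exact (div_lt_div_iff_of_pos_right hc).1 (h₁.trans h₂)

lemma binH_eq_binEntropy_div (u : ℝ) : binH u = binEntropy u / log 2 := by
  simp only [binH, binEntropy, logb, log_inv]
  ring

@[fun_prop]
lemma continuous_binH : Continuous binH := by
  simp only [funext binH_eq_binEntropy_div]
  fun_prop

@[simp]
lemma binH_zero : binH 0 = 0 := by simp [binH]

lemma binH_one_sub (u : ℝ) : binH (1 - u) = binH u := by
  simp only [binH_eq_binEntropy_div, binEntropy_one_sub]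

lemma strictConcaveOn_binH : StrictConcaveOn ℝ (Icc 0 1) binH := by
  refine ⟨convex_Icc 0 1, fun x hx y hy hxy a b ha hb hab => ?_⟩
  have h := strictConcave_binEntropy.2 hx hy hxy ha hb hab
  simp only [smul_eq_mul, binH_eq_binEntropy_div] at h ⊢
  rw [← mul_div_assoc, ← mul_div_assoc, ← add_div]
  exact div_lt_div_of_pos_right h (log_pos one_lt_two)

theorem binH_sub_bijOn (D : ℝ) (hD : D ∈ Set.Ioo (0:ℝ) 1) :
    Set.BijOn (fun u => binH u - binH (u + D - 1))
      (Set.Ico (1 - D) (1 - D / 2)) (Set.Ioc 0 (binH (1 - D))) ∧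
    (binH (1 - D) - binH ((1 - D) + D - 1) = binH (1 - D)) ∧
    Filter.Tendsto (fun u => binH u - binH (u + D - 1))
      (nhdsWithin (1 - D / 2) (Set.Iio (1 - D / 2))) (nhds 0) := by
  obtain ⟨hD0, hD1⟩ := hD
  set f : ℝ → ℝ := fun u => binH u - binH (u + D - 1) with hf
  have hanti : StrictAntiOn f (Icc (1 - D) (1 - D / 2)) := by
    have h := strictConcaveOn_binH.strictAntiOn_sub_comp_sub_const (sub_pos.2 hD1)
    simp only [sub_sub_eq_add_sub] at h
    refine h.mono fun u hu => ⟨⟨?_, ?_⟩, ?_, ?_⟩ <;> linarith [hu.1, hu.2]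
  have hfa : f (1 - D) = binH (1 - D) := by simp [hf]
  have hfb : f (1 - D / 2) = 0 := by
    show binH (1 - D / 2) - binH (1 - D / 2 + D - 1) = 0
    rw [show 1 - D / 2 + D - 1 = 1 - (1 - D / 2) by ring, binH_one_sub (1 - D / 2), sub_self]
  have hcont : Continuous f := by fun_prop
  refine ⟨?_, hfa, ?_⟩
  · rw [← hfa, ← hfb, ← hcont.continuousOn.image_Ico_of_strictAntiOn (by linarith) hanti]
    exact (hanti.injOn.mono Ico_subset_Icc_self).bijOn_image
  · exact hfb ▸ hcont.continuousAt.continuousWithinAt.tendsto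
end

section
/- For p ∈ (0,1), s > 0, and t < 0, the unique stationary point of f(q₁) = (1-p)·((1-q₁)·2^t + q₁·2^{2t})^{-s} + p·((1-q₁)·2^t + q₁)^{-s} is q₁* = ((1+2^t)/(1-2^t))·(1/(1+2^t) - p̄^{1/(s+1)}/(2^{st/(s+1)}·p^{1/(s+1)} + p̄^{1/(s+1)})), where p̄ = 1-p. That is, f'(q₁*) = 0. -/
/-!
Write `c = 2^t` and `A, B` for the two affine bases. Then
`f' = s (1 - c) ((1 - p) c A^(-s-1) - p B^(-s-1))`. At `q₁*` one has
`A = c (1-p)^(1/(s+1)) K` and `B = 2^(st/(s+1)) p^(1/(s+1)) K` with `K = (1 + c) / D`, `D` the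
denominator in `q₁*`; raising to the power `-(s+1)` turns both terms into `2^(-st) K^(-(s+1))`.
-/

open Real Set

theorem hasDerivAt_affine (x y q : ℝ) :
    HasDerivAt (fun q => (1 - q) * x + q * y) (y - x) q :=
  ((((hasDerivAt_id q).const_sub 1).mul_const x).add
    ((hasDerivAt_id q).mul_const y)).congr_deriv (by ring)

theorem hasDerivAt_mul_rpow_add_mul_rpow {u v : ℝ → ℝ} {u' v' a b r q : ℝ}
    (hu : HasDerivAt u u' q) (hv : HasDerivAt v v' q) (hu0 : u q ≠ 0) (hv0 : v q ≠ 0) :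
    HasDerivAt (fun q => a * u q ^ r + b * v q ^ r)
      (r * (a * u' * u q ^ (r - 1) + b * v' * v q ^ (r - 1))) q :=
  (((hu.rpow_const (Or.inl hu0)).const_mul a).add
    ((hv.rpow_const (Or.inl hv0)).const_mul b)).congr_deriv (by ring)

/-- The point `q₁*` of the statement, with `u = 2^(st/(s+1)) p^(1/(s+1))`, `v = (1-p)^(1/(s+1))`. -/
noncomputable def stationaryPoint (c u v : ℝ) : ℝ :=
  ((1 + c) / (1 - c)) * (1 / (1 + c) - v / (u + v))

section stationaryPoint

variable {c u v : ℝ}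

theorem stationaryPoint_mul_one_sub (hc : c ≠ 1) (hc' : 1 + c ≠ 0) (huv : u + v ≠ 0) :
    stationaryPoint c u v * (1 - c) = 1 - (1 + c) * (v / (u + v)) := by
  have : 1 - c ≠ 0 := sub_ne_zero.mpr (Ne.symm hc)
  unfold stationaryPoint
  field_simp

theorem stationaryPoint_affine_sq (hc : c ≠ 1) (hc' : 1 + c ≠ 0) (huv : u + v ≠ 0) :
    (1 - stationaryPoint c u v) * c + stationaryPoint c u v * (c * c)
      = c * v * ((1 + c) / (u + v)) := by
  linear_combination (-c) * stationaryPoint_mul_one_sub hc hc' huv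

theorem stationaryPoint_affine_one (hc : c ≠ 1) (hc' : 1 + c ≠ 0) (huv : u + v ≠ 0) :
    (1 - stationaryPoint c u v) * c + stationaryPoint c u v = u * ((1 + c) / (u + v)) := by
  rw [show (1 - stationaryPoint c u v) * c + stationaryPoint c u v
      = c + stationaryPoint c u v * (1 - c) by ring, stationaryPoint_mul_one_sub hc hc' huv]
  field_simp
  ring

end stationaryPoint

theorem rpow_one_div_rpow_neg {a r : ℝ} (ha : 0 ≤ a) (hr : r ≠ 0) :
    (a ^ (1 / r)) ^ (-r) = a⁻¹ := by
  rw [← rpow_mul ha, one_div_mul_eq_div, neg_div, div_self hr, rpow_neg_one]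

theorem stationary_balance {p s t K : ℝ} (hp0 : 0 < p) (hp1 : p < 1) (hs : s + 1 ≠ 0)
    (hK : 0 < K) :
    (1 - p) * 2 ^ t * (2 ^ t * (1 - p) ^ (1 / (s + 1)) * K) ^ (-s - 1)
      = p * (2 ^ (s * t / (s + 1)) * p ^ (1 / (s + 1)) * K) ^ (-s - 1) := by
  have hq0 : 0 < 1 - p := sub_pos.mpr hp1
  have h2 : (0:ℝ) ≤ 2 := zero_le_two
  rw [show -s - 1 = -(s + 1) by ring, mul_rpow (by positivity) hK.le, mul_rpow (by positivity) (by positivity),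
    mul_rpow (by positivity) hK.le, mul_rpow (by positivity) (by positivity),
    rpow_one_div_rpow_neg hq0.le hs, rpow_one_div_rpow_neg hp0.le hs, ← rpow_mul h2,
    ← rpow_mul h2, show s * t / (s + 1) * -(s + 1) = t + t * -(s + 1) by field_simp; ring,
    rpow_add two_pos]
  field_simp

theorem f_deriv_zero_at_stationary (p s t : ℝ) (hp : p ∈ Set.Ioo (0:ℝ) 1)
    (hs : 0 < s) (ht : t < 0) :
    deriv (fun q₁ => (1 - p) * ((1 - q₁) * (2:ℝ) ^ t + q₁ * (2:ℝ) ^ (2 * t)) ^ (-s)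
        + p * ((1 - q₁) * (2:ℝ) ^ t + q₁) ^ (-s))
      (((1 + (2:ℝ) ^ t) / (1 - (2:ℝ) ^ t)) *
        (1 / (1 + (2:ℝ) ^ t) -
          (1 - p) ^ (1 / (s + 1)) /
            ((2:ℝ) ^ (s * t / (s + 1)) * p ^ (1 / (s + 1)) + (1 - p) ^ (1 / (s + 1)))))
      = 0 := by
  obtain ⟨hp0, hp1⟩ := hp
  set c : ℝ := (2:ℝ) ^ t
  set u : ℝ := (2:ℝ) ^ (s * t / (s + 1)) * p ^ (1 / (s + 1))
  set v : ℝ := (1 - p) ^ (1 / (s + 1))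
  have hc0 : 0 < c := rpow_pos_of_pos two_pos t
  have hc1 : c < 1 := rpow_lt_one_of_one_lt_of_neg one_lt_two ht
  have hu : 0 < u := mul_pos (rpow_pos_of_pos two_pos _) (rpow_pos_of_pos hp0 _)
  have hv : 0 < v := rpow_pos_of_pos (sub_pos.mpr hp1) _
  have hK : 0 < (1 + c) / (u + v) := by positivity
  have hA := stationaryPoint_affine_sq hc1.ne (by positivity) (by positivity : u + v ≠ 0)
  have hB := stationaryPoint_affine_one hc1.ne (by positivity) (by positivity : u + v ≠ 0)
  rw [show (2:ℝ) ^ (2 * t) = c * c by rw [two_mul, rpow_add two_pos]]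
  change deriv _ (stationaryPoint c u v) = 0
  have hf := hasDerivAt_mul_rpow_add_mul_rpow (a := 1 - p) (b := p) (r := -s)
    (hasDerivAt_affine c (c * c) (stationaryPoint c u v))
    (by simpa only [mul_one] using hasDerivAt_affine c 1 (stationaryPoint c u v))
    (by rw [hA]; positivity) (by rw [hB]; positivity)
  rw [hf.deriv, hA, hB]
  linear_combination (s * (1 - c)) * stationary_balance hp0 hp1 (by positivity) hK
end

section
/- Let p ∈ (0,1), s > 0, t < 0, and define β = ((1+2^t)/(1-2^t))·(1/(1+2^t) - p̄^{1/(s+1)}/(2^{st/(s+1)}·p^{1/(s+1)} + p̄^{1/(s+1)})) with p̄ = 1-p. If p ≤ 2^t/(1+2^t), then β ≤ 0. -/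
open Real Set

theorem beta_nonpos (p s t : ℝ) (hp : p ∈ Set.Ioo (0:ℝ) 1) (hs : 0 < s) (ht : t < 0)
    (hcase : p ≤ (2:ℝ) ^ t / (1 + (2:ℝ) ^ t)) :
    ((1 + (2:ℝ) ^ t) / (1 - (2:ℝ) ^ t)) *
      (1 / (1 + (2:ℝ) ^ t) -
        (1 - p) ^ (1 / (s + 1)) /
          ((2:ℝ) ^ (s * t / (s + 1)) * p ^ (1 / (s + 1)) + (1 - p) ^ (1 / (s + 1)))) ≤ 0 := by
  obtain ⟨hp0, hp1⟩ := hp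
  have hq : (0:ℝ) < 1 - p := by linarith
  have h2t : (0:ℝ) < (2:ℝ) ^ t := Real.rpow_pos_of_pos two_pos t
  have h2lt : (2:ℝ) ^ t < 1 := Real.rpow_lt_one_of_one_lt_of_neg one_lt_two ht
  have hs1 : (0:ℝ) < s + 1 := by linarith
  -- key: p ≤ 2^t * (1-p)
  have hkey : p ≤ (2:ℝ) ^ t * (1 - p) := by
    have h := (le_div_iff₀ (by linarith : (0:ℝ) < 1 + (2:ℝ)^t)).mp hcase
    nlinarith [h]
  have hpow : p ^ (1/(s+1)) ≤ ((2:ℝ) ^ t * (1 - p)) ^ (1/(s+1)) :=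
    Real.rpow_le_rpow hp0.le hkey (by positivity)
  have hsplit : ((2:ℝ) ^ t * (1 - p)) ^ (1/(s+1))
      = (2:ℝ) ^ (t/(s+1)) * (1 - p) ^ (1/(s+1)) := by
    rw [Real.mul_rpow h2t.le hq.le, ← Real.rpow_mul (by norm_num : (0:ℝ) ≤ 2)]
    ring_nf
  have hD : (2:ℝ) ^ (s * t / (s + 1)) * p ^ (1/(s+1)) + (1 - p) ^ (1/(s+1))
      ≤ (1 + (2:ℝ) ^ t) * (1 - p) ^ (1/(s+1)) := by
    have h2p : (0:ℝ) < (2:ℝ) ^ (s * t / (s + 1)) := Real.rpow_pos_of_pos two_pos _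
    have hm : (2:ℝ) ^ (s * t / (s + 1)) * p ^ (1/(s+1))
        ≤ (2:ℝ) ^ (s * t / (s + 1)) * ((2:ℝ) ^ (t/(s+1)) * (1 - p) ^ (1/(s+1))) := by
      rw [← hsplit]
      exact mul_le_mul_of_nonneg_left hpow h2p.le
    have hcomb : (2:ℝ) ^ (s * t / (s + 1)) * (2:ℝ) ^ (t/(s+1)) = (2:ℝ) ^ t := by
      rw [← Real.rpow_add two_pos]
      congr 1
      field_simp
    calc (2:ℝ) ^ (s * t / (s + 1)) * p ^ (1/(s+1)) + (1 - p) ^ (1/(s+1))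
        ≤ (2:ℝ) ^ (s * t / (s + 1)) * ((2:ℝ) ^ (t/(s+1)) * (1 - p) ^ (1/(s+1)))
            + (1 - p) ^ (1/(s+1)) := by linarith
      _ = (1 + (2:ℝ) ^ t) * (1 - p) ^ (1/(s+1)) := by
            rw [← mul_assoc, hcomb]; ring
  have hDpos : (0:ℝ) < (2:ℝ) ^ (s * t / (s + 1)) * p ^ (1/(s+1)) + (1 - p) ^ (1/(s+1)) := by
    positivity
  have hbr : 1 / (1 + (2:ℝ) ^ t) -
      (1 - p) ^ (1/(s+1)) /
        ((2:ℝ) ^ (s * t / (s + 1)) * p ^ (1/(s+1)) + (1 - p) ^ (1/(s+1))) ≤ 0 := by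
    have : 1 / (1 + (2:ℝ) ^ t)
        ≤ (1 - p) ^ (1/(s+1)) /
          ((2:ℝ) ^ (s * t / (s + 1)) * p ^ (1/(s+1)) + (1 - p) ^ (1/(s+1))) := by
      rw [div_le_div_iff₀ (by linarith) hDpos]
      linarith
    linarith
  have hfac : (0:ℝ) ≤ (1 + (2:ℝ) ^ t) / (1 - (2:ℝ) ^ t) := by
    apply div_nonneg <;> linarith
  exact mul_nonpos_of_nonneg_of_nonpos hfac hbr
end

section
/- Let p ∈ (0,1), s > 0, t < 0, and define β = ((1+2^t)/(1-2^t))·(1/(1+2^t) - p̄^{1/(s+1)}/(2^{st/(s+1)}·p^{1/(s+1)} + p̄^{1/(s+1)})) with p̄ = 1-p. If p ≥ 1/(1+2^{t(2s+1)}), then β ≥ 1. -/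
open Real Set

theorem beta_ge_one (p s t : ℝ) (hp : p ∈ Set.Ioo (0:ℝ) 1) (hs : 0 < s) (ht : t < 0)
    (hcase : 1 / (1 + (2:ℝ) ^ (t * (2 * s + 1))) ≤ p) :
    1 ≤ ((1 + (2:ℝ) ^ t) / (1 - (2:ℝ) ^ t)) *
      (1 / (1 + (2:ℝ) ^ t) -
        (1 - p) ^ (1 / (s + 1)) /
          ((2:ℝ) ^ (s * t / (s + 1)) * p ^ (1 / (s + 1)) + (1 - p) ^ (1 / (s + 1)))) := by
  obtain ⟨hp0, hp1⟩ := hp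
  set a : ℝ := (2:ℝ) ^ t with ha
  set c : ℝ := (2:ℝ) ^ (s * t / (s + 1)) with hc
  set q : ℝ := (1 - p) ^ (1 / (s + 1)) with hq
  set r : ℝ := p ^ (1 / (s + 1)) with hr
  have hs1 : (0:ℝ) < s + 1 := by linarith
  have ha0 : 0 < a := rpow_pos_of_pos two_pos t
  have ha1 : a < 1 := rpow_lt_one_of_one_lt_of_neg (by norm_num) ht
  have hc0 : 0 < c := rpow_pos_of_pos two_pos _
  have hq0 : 0 < q := rpow_pos_of_pos (by linarith) _
  have hr0 : 0 < r := rpow_pos_of_pos hp0 _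
  have hA0 : (0:ℝ) < (2:ℝ) ^ (t * (2 * s + 1)) := rpow_pos_of_pos two_pos _
  -- from hcase: 1 - p ≤ A * p
  have hkey0 : 1 - p ≤ (2:ℝ) ^ (t * (2 * s + 1)) * p := by
    rw [div_le_iff₀ (by linarith)] at hcase
    nlinarith
  -- raise to power 1/(s+1)
  have hkey1 : q ≤ ((2:ℝ) ^ (t * (2 * s + 1)) * p) ^ (1 / (s + 1)) :=
    rpow_le_rpow (by linarith) hkey0 (by positivity)
  have hexp : ((2:ℝ) ^ (t * (2 * s + 1)) * p) ^ (1 / (s + 1)) = a * (c * r) := by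
    have hac : a * c = (2:ℝ) ^ (t * (2 * s + 1) * (1 / (s + 1))) := by
      rw [ha, hc, ← Real.rpow_add two_pos]
      congr 1
      field_simp
      ring
    rw [mul_rpow hA0.le hp0.le, ← Real.rpow_mul (by norm_num : (0:ℝ) ≤ 2), ← hac,
      mul_assoc]
  rw [hexp] at hkey1
  -- main manipulation
  have hD : 0 < c * r + q := by positivity
  have h1 : q / (c * r + q) ≤ a / (1 + a) := by
    rw [div_le_div_iff₀ hD (by linarith)]
    nlinarith
  have h2 : (1 - a) / (1 + a) ≤ 1 / (1 + a) - q / (c * r + q) := by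
    have : (1 - a) / (1 + a) = 1 / (1 + a) - a / (1 + a) := by ring
    linarith
  calc (1:ℝ) = ((1 + a) / (1 - a)) * ((1 - a) / (1 + a)) := by
        rw [div_mul_div_comm, eq_comm,
          div_eq_one_iff_eq (mul_pos (by linarith) (by linarith)).ne']
        ring
      _ ≤ ((1 + a) / (1 - a)) * (1 / (1 + a) - q / (c * r + q)) := by
        apply mul_le_mul_of_nonneg_left h2
        exact le_of_lt (div_pos (by linarith) (by linarith))
end
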